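/- arXiv:1911.10507 — 4 statements merged into one kernel-verified Lean document; each statement's English description precedes it below -/
import Mathlib

section
/- Let n ≥ 2 and define, for x, z ∈ S^n with z ≠ ±x, ω(x,z) = −∫_0^∞ r^{n−1} / |x − r z|^{n+1} dr. Then there exist constants C > 0 and δ ∈ (0,1) such that for all x, z ∈ S^n with 0 < |x − z| < δ, one has |ω(x,z)| ≤ C |x − z|^{−n}. -/
open MeasureTheory Metric Set

open Real

/-- The kernel `ω(x,z) = -∫₀^∞ r^{n-1}/|x - rz|^{n+1} dr`. -/
noncomputable def omegaKer (n : ℕ) (x z : EuclideanSpace ℝ (Fin (n + 1))) : ℝ :=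
  -∫ r in Set.Ioi (0 : ℝ), r ^ (n - 1) / ‖x - r • z‖ ^ (n + 1)

set_option maxHeartbeats 1000000 in
/-- near-diagonal estimate `|ω(x,z)| ≤ C |x-z|^{-n}`. -/
theorem stmt_9 (n : ℕ) (hn : 2 ≤ n) :
    ∃ C : ℝ, 0 < C ∧ ∃ δ ∈ Set.Ioo (0 : ℝ) 1,
      ∀ x ∈ sphere (0 : EuclideanSpace ℝ (Fin (n + 1))) 1,
        ∀ z ∈ sphere (0 : EuclideanSpace ℝ (Fin (n + 1))) 1,
          0 < ‖x - z‖ → ‖x - z‖ < δ →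
            |omegaKer n x z| ≤ C / ‖x - z‖ ^ n := by
  refine ⟨2^(2*n) * (π + 1), by positivity, 1/2, ⟨by norm_num, by norm_num⟩, ?_⟩
  intro x hx z hz hd0 hdlt
  have hx1 : ‖x‖ = 1 := by simpa using mem_sphere_zero_iff_norm.mp hx
  have hz1 : ‖z‖ = 1 := by simpa using mem_sphere_zero_iff_norm.mp hz
  set d := ‖x - z‖ with hd
  set c : ℝ := inner ℝ x z with hc
  have hdc : d ^ 2 = 2 - 2 * c := by
    rw [hd, norm_sub_sq_real, hx1, hz1, ← hc]; ring
  have hd1 : d < 1 := by linarith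
  have hcpos : 1/2 < c := by nlinarith
  have hcle : c < 1 := by nlinarith
  set s2 : ℝ := 1 - c^2 with hs2def
  have hs2pos : 0 < s2 := by nlinarith
  have hs2ge : d^2/2 ≤ s2 := by nlinarith
  set s : ℝ := Real.sqrt s2 with hsdef
  have hspos : 0 < s := Real.sqrt_pos.mpr hs2pos
  have hssq : s^2 = s2 := Real.sq_sqrt hs2pos.le
  -- norm identity
  have hnorm : ∀ r : ℝ, ‖x - r • z‖^2 = (r - c)^2 + s2 := by
    intro r
    rw [norm_sub_sq_real, real_inner_smul_right, norm_smul, hx1, hz1, ← hc, hs2def]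
    simp only [Real.norm_eq_abs, mul_pow, sq_abs, mul_one, one_pow]
    ring
  have hnormge : ∀ r : ℝ, s ≤ ‖x - r • z‖ := by
    intro r
    have h1 : s^2 ≤ ‖x - r • z‖^2 := by rw [hssq, hnorm]; nlinarith [sq_nonneg (r - c)]
    calc s = Real.sqrt (s^2) := (Real.sqrt_sq hspos.le).symm
      _ ≤ Real.sqrt (‖x - r • z‖^2) := Real.sqrt_le_sqrt h1
      _ = ‖x - r • z‖ := Real.sqrt_sq (norm_nonneg _)
  clear_value d c s2 s
  have hKpos : (0:ℝ) < 2^(n-1)/s^(n+1) := by positivity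
  -- pointwise bound
  have hfg : ∀ r ∈ Ioi (0:ℝ), r ^ (n-1) / ‖x - r • z‖ ^ (n+1) ≤
      2^(n-1)/s^(n+1) * (1 + ((r - c)/s)^2)⁻¹
        + (Ioi (2:ℝ)).indicator (fun r => 2^(n+1)/r^2) r := by
    intro r hr0
    have hr0' : 0 < r := hr0
    have hnr : 0 < ‖x - r • z‖ := lt_of_lt_of_le hspos (hnormge r)
    have hD : (0:ℝ) < (r-c)^2 + s2 := by nlinarith [sq_nonneg (r-c)]
    rcases le_or_gt r 2 with h2 | h2
    · rw [Set.indicator_of_notMem (by simpa using h2 : r ∉ Ioi (2:ℝ))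
        (fun r => (2:ℝ)^(n+1)/r^2), add_zero]
      have e1 : (1 + ((r - c)/s)^2)⁻¹ = s^2 / ((r-c)^2 + s2) := by
        rw [div_pow, ← hssq, eq_div_iff (by nlinarith [sq_nonneg (r-c), hssq])]
        field_simp
        ring
      have hsn : s^(n+1) = s^(n-1) * s^2 := by rw [← pow_add]; congr 1; omega
      have hden : s^(n-1) * ((r-c)^2 + s2) ≤ ‖x - r • z‖^(n+1) := by
        have h3 : ‖x - r • z‖^(n+1) = ‖x - r • z‖^(n-1) * ‖x - r • z‖^2 := by
          rw [← pow_add]; congr 1; omega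
        rw [h3, hnorm r]
        exact mul_le_mul_of_nonneg_right (pow_le_pow_left₀ hspos.le (hnormge r) _) hD.le
      have hnum : r^(n-1) ≤ 2^(n-1) := pow_le_pow_left₀ hr0'.le h2 _
      calc r ^ (n-1) / ‖x - r • z‖ ^ (n+1)
          ≤ 2^(n-1) / (s^(n-1) * ((r-c)^2 + s2)) :=
            div_le_div₀ (by positivity) hnum
              (mul_pos (pow_pos hspos _) hD) hden
        _ = 2^(n-1)/s^(n+1) * (1 + ((r - c)/s)^2)⁻¹ := by
            rw [e1, hsn]
            field_simp
    · have hr1 : r/2 ≤ ‖x - r • z‖ := by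
        have h4 : ‖r • z‖ - ‖x‖ ≤ ‖x - r • z‖ := by
          rw [norm_sub_rev]; exact norm_sub_norm_le _ _
        rw [norm_smul, hz1, hx1, Real.norm_eq_abs, abs_of_pos hr0'] at h4
        linarith
      have hrp : (0:ℝ) < r/2 := by linarith
      have key : r ^ (n-1) / ‖x - r • z‖ ^ (n+1) ≤ 2^(n+1)/r^2 := by
        calc r ^ (n-1) / ‖x - r • z‖ ^ (n+1)
            ≤ r^(n-1)/(r/2)^(n+1) :=
              div_le_div_of_nonneg_left (by positivity) (by positivity)
                (pow_le_pow_left₀ hrp.le hr1 _)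
          _ = 2^(n+1)/r^2 := by
              have hrn : r^(n+1) = r^(n-1)*r^2 := by rw [← pow_add]; congr 1; omega
              rw [div_eq_div_iff (by positivity) (by positivity), div_pow, ← hrn]
              field_simp
      rw [Set.indicator_of_mem (show r ∈ Ioi (2:ℝ) from h2) (fun r => (2:ℝ)^(n+1)/r^2)]
      have : (0:ℝ) ≤ 2^(n-1)/s^(n+1) * (1 + ((r - c)/s)^2)⁻¹ := by positivity
      linarith
  -- integrability
  have hg1int : Integrable (fun r : ℝ => 2^(n-1)/s^(n+1) * (1 + ((r - c)/s)^2)⁻¹) :=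
    ((integrable_inv_one_add_sq.comp_div hspos.ne').comp_sub_right c).const_mul _
  have hg2on : IntegrableOn (fun r : ℝ => (2:ℝ)^(n+1)/r^2) (Ioi 2) := by
    have base : IntegrableOn (fun r : ℝ => (2:ℝ)^(n+1) * r ^ (-2:ℝ)) (Ioi 2) :=
      (integrableOn_Ioi_rpow_of_lt (show (-2:ℝ) < -1 by norm_num)
        (show (0:ℝ) < 2 by norm_num)).const_mul ((2:ℝ)^(n+1))
    refine IntegrableOn.congr_fun base ?_ measurableSet_Ioi
    intro r hr
    have hr0 : (0:ℝ) < r := lt_trans two_pos hr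
    show (2:ℝ)^(n+1) * r ^ (-2:ℝ) = (2:ℝ)^(n+1)/r^2
    rw [Real.rpow_neg hr0.le, show ((2:ℝ)) = ((2:ℕ):ℝ) by norm_num, Real.rpow_natCast,
      div_eq_mul_inv]
  have hg2int : Integrable ((Ioi (2:ℝ)).indicator (fun r => 2^(n+1)/r^2)) :=
    (integrable_indicator_iff measurableSet_Ioi).mpr hg2on
  -- reduce to integral comparison
  have hf_nonneg : ∀ r ∈ Ioi (0:ℝ), 0 ≤ r ^ (n-1) / ‖x - r • z‖ ^ (n+1) := by
    intro r hr
    have hr' : (0:ℝ) < r := hr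
    positivity
  have h0 : |omegaKer n x z| = ∫ r in Ioi (0:ℝ), r ^ (n-1) / ‖x - r • z‖ ^ (n+1) := by
    rw [omegaKer, abs_neg,
      abs_of_nonneg (setIntegral_nonneg measurableSet_Ioi hf_nonneg)]
  have hmono : (∫ r in Ioi (0:ℝ), r ^ (n-1) / ‖x - r • z‖ ^ (n+1)) ≤
      ∫ r in Ioi (0:ℝ), (2^(n-1)/s^(n+1) * (1 + ((r - c)/s)^2)⁻¹
        + (Ioi (2:ℝ)).indicator (fun r => 2^(n+1)/r^2) r) :=
    integral_mono_of_nonneg ((ae_restrict_iff' measurableSet_Ioi).mpr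
        (Filter.Eventually.of_forall hf_nonneg))
      (hg1int.add hg2int).integrableOn
      ((ae_restrict_iff' measurableSet_Ioi).mpr (Filter.Eventually.of_forall hfg))
  -- compute/bound the two integrals
  have i1 : (∫ r in Ioi (0:ℝ), 2^(n-1)/s^(n+1) * (1 + ((r - c)/s)^2)⁻¹) ≤ 2^(n-1)*π/s^n := by
    have le1 : (∫ r in Ioi (0:ℝ), 2^(n-1)/s^(n+1) * (1 + ((r - c)/s)^2)⁻¹) ≤
        ∫ r : ℝ, 2^(n-1)/s^(n+1) * (1 + ((r - c)/s)^2)⁻¹ :=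
      setIntegral_le_integral hg1int (Filter.Eventually.of_forall fun r => by positivity)
    have veq : (∫ r : ℝ, 2^(n-1)/s^(n+1) * (1 + ((r - c)/s)^2)⁻¹)
        = 2^(n-1)/s^(n+1) * (s * π) := by
      rw [integral_const_mul]
      congr 1
      rw [integral_sub_right_eq_self (fun y => (1 + (y/s)^2)⁻¹) c,
        Measure.integral_comp_div (fun y : ℝ => (1 + y^2)⁻¹) s,
        integral_univ_inv_one_add_sq, abs_of_pos hspos, smul_eq_mul]
    have veq2 : 2^(n-1)/s^(n+1) * (s * π) = 2^(n-1)*π/s^n := by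
      rw [pow_succ]; field_simp
    exact le1.trans (le_of_eq (veq.trans veq2))
  have i2 : (∫ r in Ioi (0:ℝ), (Ioi (2:ℝ)).indicator (fun r => 2^(n+1)/r^2) r) = 2^n := by
    rw [integral_indicator measurableSet_Ioi,
      Measure.restrict_restrict measurableSet_Ioi,
      show Ioi (2:ℝ) ∩ Ioi 0 = Ioi 2 by
        rw [inter_eq_self_of_subset_left]; exact fun r hr => mem_Ioi.mpr (lt_trans two_pos (mem_Ioi.mp hr))]
    have hcg : (∫ r in Ioi (2:ℝ), (2:ℝ)^(n+1)/r^2)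
        = ∫ r in Ioi (2:ℝ), (2:ℝ)^(n+1) * r ^ (-2:ℝ) := by
      refine setIntegral_congr_fun measurableSet_Ioi ?_
      intro r hr
      have hr0 : (0:ℝ) < r := lt_trans two_pos hr
      show (2:ℝ)^(n+1)/r^2 = (2:ℝ)^(n+1) * r ^ (-2:ℝ)
      rw [Real.rpow_neg hr0.le, show ((2:ℝ)) = ((2:ℕ):ℝ) by norm_num, Real.rpow_natCast,
        div_eq_mul_inv]
    rw [hcg, integral_const_mul, integral_Ioi_rpow_of_lt (by norm_num) (by norm_num),
      show (-2:ℝ) + 1 = -1 by norm_num, Real.rpow_neg_one, pow_succ]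
    field_simp
  -- final arithmetic
  have hdn : 0 < d^n := pow_pos hd0 n
  have hds : d ≤ 2*s := by
    have hsq : d^2 ≤ (2*s)^2 := by rw [mul_pow, hssq]; nlinarith
    calc d = Real.sqrt (d^2) := (Real.sqrt_sq hd0.le).symm
      _ ≤ Real.sqrt ((2*s)^2) := Real.sqrt_le_sqrt hsq
      _ = 2*s := Real.sqrt_sq (by positivity)
  have hdsn : d^n ≤ 2^n * s^n := by rw [← mul_pow]; exact pow_le_pow_left₀ hd0.le hds n
  have t1 : 2^(n-1)*π/s^n ≤ 2^(2*n)*π/d^n := by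
    rw [div_le_div_iff₀ (by positivity) hdn]
    calc 2^(n-1)*π*d^n ≤ 2^(n-1)*π*(2^n*s^n) :=
          mul_le_mul_of_nonneg_left hdsn (by positivity)
      _ = (2^(n-1)*2^n)*(π*s^n) := by ring
      _ ≤ 2^(2*n)*(π*s^n) := by
          refine mul_le_mul_of_nonneg_right ?_ (by positivity)
          rw [← pow_add]
          exact pow_le_pow_right₀ one_le_two (by omega)
      _ = 2^(2*n)*π*s^n := by ring
  have t2 : (2:ℝ)^n ≤ 2^(2*n)/d^n := by
    rw [le_div_iff₀ hdn]
    calc (2:ℝ)^n * d^n ≤ 2^n * 1 :=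
          mul_le_mul_of_nonneg_left (pow_le_one₀ hd0.le hd1.le) (by positivity)
      _ = 2^n := mul_one _
      _ ≤ 2^(2*n) := pow_le_pow_right₀ one_le_two (by omega)
  -- assemble
  rw [h0]
  calc (∫ r in Ioi (0:ℝ), r ^ (n-1) / ‖x - r • z‖ ^ (n+1))
      ≤ ∫ r in Ioi (0:ℝ), (2^(n-1)/s^(n+1) * (1 + ((r - c)/s)^2)⁻¹
          + (Ioi (2:ℝ)).indicator (fun r => 2^(n+1)/r^2) r) := hmono
    _ = (∫ r in Ioi (0:ℝ), 2^(n-1)/s^(n+1) * (1 + ((r - c)/s)^2)⁻¹)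
          + ∫ r in Ioi (0:ℝ), (Ioi (2:ℝ)).indicator (fun r => 2^(n+1)/r^2) r :=
        integral_add hg1int.integrableOn hg2int.integrableOn
    _ ≤ 2^(n-1)*π/s^n + 2^n := by rw [i2]; exact add_le_add_left i1 _
    _ ≤ 2^(2*n)*π/d^n + 2^(2*n)/d^n := add_le_add t1 t2
    _ = 2^(2*n)*(π+1)/d^n := by ring
end

section
/- Let n ≥ 2 and define, for x, ξ, z ∈ S^n with ⟨ξ, x⟩ = 0 and z ≠ ±x, ω̂(x,ξ,z) = (1/ω_n) ∫_0^∞ [ ( |x − rz|² − (n+1) ⟨ξ, rz⟩² ) / |x − rz|^{n+3} ] r^{n−1} dr. Then there exist constants C > 0 and δ ∈ (0,1) such that for all x, ξ, z ∈ S^n with ⟨ξ, x⟩ = 0 and 0 < |x − z| < δ, one has |ω̂(x,ξ,z)| ≤ C |x − z|^{−n}. -/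
open MeasureTheory Metric Set
open scoped RealInnerProductSpace

/-- `ω_n`, the total surface measure of the unit sphere `Sⁿ ⊂ ℝ^{n+1}`. -/
noncomputable def omega_n (n : ℕ) : ℝ :=
  ((volume : Measure (EuclideanSpace ℝ (Fin (n + 1)))).toSphere Set.univ).toReal

/-- The kernel `ω̂(x,ξ,z) = (1/ω_n) ∫₀^∞ (|x-rz|² - (n+1)⟨ξ,rz⟩²)/|x-rz|^{n+3} · r^{n-1} dr`. -/
noncomputable def omegaHat (n : ℕ) (x ξ z : EuclideanSpace ℝ (Fin (n + 1))) : ℝ :=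
  (1 / omega_n n) * ∫ r in Set.Ioi (0 : ℝ),
    (‖x - r • z‖ ^ 2 - (n + 1) * ⟪ξ, r • z⟫ ^ 2) / ‖x - r • z‖ ^ (n + 3) * r ^ (n - 1)


lemma aux_hasDeriv (c m : ℝ) (hm : 0 < m) (r : ℝ) :
    HasDerivAt (fun t : ℝ => m⁻¹ * Real.arctan ((t - c) * m⁻¹))
      (((r - c) ^ 2 + m ^ 2)⁻¹) r := by
  have h1 : HasDerivAt (fun t : ℝ => (t - c) * m⁻¹) m⁻¹ r := by
    simpa using ((hasDerivAt_id r).sub_const c).mul_const m⁻¹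
  have h2 := (Real.hasDerivAt_arctan ((r - c) * m⁻¹)).comp r h1
  have h3 := h2.const_mul m⁻¹
  refine h3.congr_deriv ?_
  field_simp
  ring

lemma aux_tendsto (c m : ℝ) (hm : 0 < m) :
    Filter.Tendsto (fun t : ℝ => m⁻¹ * Real.arctan ((t - c) * m⁻¹))
      Filter.atTop (nhds (m⁻¹ * (Real.pi / 2))) := by
  have h0 : Filter.Tendsto (fun t : ℝ => (t - c) * m⁻¹) Filter.atTop Filter.atTop := by
    exact Filter.Tendsto.atTop_mul_const (inv_pos.2 hm)
      (Filter.tendsto_atTop_add_const_right _ (-c) Filter.tendsto_id)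
  exact ((Real.tendsto_arctan_atTop.mono_right nhdsWithin_le_nhds).comp h0).const_mul m⁻¹

lemma aux_integrable (c m : ℝ) (hm : 0 < m) :
    IntegrableOn (fun r : ℝ => ((r - c) ^ 2 + m ^ 2)⁻¹) (Ioi 0) := by
  have hcont : ContinuousWithinAt (fun t : ℝ => m⁻¹ * Real.arctan ((t - c) * m⁻¹)) (Ici 0) 0 :=
    ((aux_hasDeriv c m hm 0).continuousAt).continuousWithinAt
  exact integrableOn_Ioi_deriv_of_nonneg hcont (fun x _ => aux_hasDeriv c m hm x)
    (fun x _ => by positivity) (aux_tendsto c m hm)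

lemma aux_integral_le (c m : ℝ) (hm : 0 < m) :
    ∫ r in Ioi (0 : ℝ), ((r - c) ^ 2 + m ^ 2)⁻¹ ≤ Real.pi / m := by
  have hcont : ContinuousWithinAt (fun t : ℝ => m⁻¹ * Real.arctan ((t - c) * m⁻¹)) (Ici 0) 0 :=
    ((aux_hasDeriv c m hm 0).continuousAt).continuousWithinAt
  have := integral_Ioi_of_hasDerivAt_of_nonneg hcont (fun x _ => aux_hasDeriv c m hm x)
    (fun x _ => by positivity) (aux_tendsto c m hm)
  rw [this]
  have h1 : Real.arctan ((0 - c) * m⁻¹) ≥ -(Real.pi / 2) := (Real.neg_pi_div_two_lt_arctan _).le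
  have hmi : 0 < m⁻¹ := inv_pos.2 hm
  have h2 : m⁻¹ * (Real.pi / 2) - m⁻¹ * Real.arctan ((0 - c) * m⁻¹)
      ≤ m⁻¹ * (Real.pi / 2) + m⁻¹ * (Real.pi / 2) := by nlinarith
  calc m⁻¹ * (Real.pi / 2) - m⁻¹ * Real.arctan ((0 - c) * m⁻¹)
      ≤ m⁻¹ * (Real.pi / 2) + m⁻¹ * (Real.pi / 2) := h2
    _ = Real.pi / m := by field_simp; ring

lemma omega_n_pos (n : ℕ) : 0 < omega_n n := by
  rw [omega_n]
  apply ENNReal.toReal_pos _ (measure_ne_top _ _)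
  rw [Measure.toSphere_apply_univ]
  refine (ENNReal.mul_pos ?_ ?_).ne'
  · simp [finrank_euclideanSpace_fin]
  · exact (measure_ball_pos volume (0 : EuclideanSpace ℝ (Fin (n + 1))) one_pos).ne'

lemma ptwise (k : ℕ) (c m d r N Q : ℝ)
    (hm0 : 0 < m) (hm1 : m ≤ 1) (hdm : d ^ 2 ≤ 2 * m ^ 2)
    (hc : c ≤ 1) (hr : 0 < r)
    (hN : N ^ 2 = (r - c) ^ 2 + m ^ 2) (hNpos : 0 < N) (hQ : |Q| ≤ r * d) (hd0 : 0 ≤ d) :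
    |(N ^ 2 - ((k : ℝ) + 3) * Q ^ 2) / N ^ (k + 5) * r ^ (k + 1)| ≤
      ((2 ^ (k + 1) + ((k : ℝ) + 3) * 2 ^ (k + 4)) * (m⁻¹) ^ (k + 1)) * ((r - c) ^ 2 + m ^ 2)⁻¹ := by
  set M := m⁻¹ with hM
  have hmM : m * M = 1 := mul_inv_cancel₀ hm0.ne'
  have hM1 : 1 ≤ M := by rw [hM]; exact (one_le_inv_iff₀).2 ⟨hm0, hm1⟩
  have hMpos : 0 < M := inv_pos.2 hm0
  have hmN : m ≤ N := by nlinarith [sq_nonneg (N - m), sq_nonneg (r - c)]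
  have hrMN : r ≤ 2 * (M * N) := by
    have h1 : r - c ≤ N := by nlinarith [sq_nonneg (r - c + N)]
    have h2 : N ≤ M * N := le_mul_of_one_le_left hNpos.le hM1
    have h3 : 1 ≤ M * N := by
      calc (1:ℝ) = m * M := hmM.symm
        _ ≤ N * M := by nlinarith
        _ = M * N := mul_comm _ _
    nlinarith
  set ck : ℝ := (k : ℝ) + 3 with hck
  have hck0 : 0 < ck := by positivity
  -- numerator bound
  have hnum : |N ^ 2 - ck * Q ^ 2| ≤ N ^ 2 + ck * (r * d) ^ 2 := by
    have hQ2 : Q ^ 2 ≤ (r * d) ^ 2 := by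
      have := sq_abs Q
      nlinarith [abs_nonneg Q]
    calc |N ^ 2 - ck * Q ^ 2| ≤ |N ^ 2| + |ck * Q ^ 2| := abs_sub _ _
      _ = N ^ 2 + ck * Q ^ 2 := by
          rw [abs_of_nonneg (by positivity), abs_of_nonneg (by positivity)]
      _ ≤ N ^ 2 + ck * (r * d) ^ 2 := by nlinarith
  -- main polynomial inequality
  have hr1 : r ^ (k + 1) ≤ (2 * (M * N)) ^ (k + 1) := pow_le_pow_left₀ hr.le hrMN _
  have hr3 : r ^ (k + 3) ≤ (2 * (M * N)) ^ (k + 3) := pow_le_pow_left₀ hr.le hrMN _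
  have key : (N ^ 2 + ck * (r * d) ^ 2) * r ^ (k + 1)
      ≤ (2 ^ (k + 1) + ck * 2 ^ (k + 4)) * M ^ (k + 1) * N ^ (k + 3) := by
    have e1 : (N ^ 2 + ck * (r * d) ^ 2) * r ^ (k + 1)
        = N ^ 2 * r ^ (k + 1) + ck * d ^ 2 * r ^ (k + 3) := by ring
    have b1 : N ^ 2 * r ^ (k + 1) ≤ 2 ^ (k + 1) * M ^ (k + 1) * N ^ (k + 3) := by
      have : N ^ 2 * r ^ (k + 1) ≤ N ^ 2 * (2 * (M * N)) ^ (k + 1) := by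
        apply mul_le_mul_of_nonneg_left hr1 (by positivity)
      calc N ^ 2 * r ^ (k + 1) ≤ N ^ 2 * (2 * (M * N)) ^ (k + 1) := this
        _ = 2 ^ (k + 1) * M ^ (k + 1) * N ^ (k + 3) := by
            rw [mul_pow, mul_pow]; ring
    have b2 : ck * d ^ 2 * r ^ (k + 3) ≤ ck * 2 ^ (k + 4) * M ^ (k + 1) * N ^ (k + 3) := by
      have h1 : d ^ 2 * r ^ (k + 3) ≤ (2 * m ^ 2) * (2 * (M * N)) ^ (k + 3) := by
        apply mul_le_mul hdm hr3 (by positivity) (by positivity)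
      have h2 : (2 * m ^ 2) * (2 * (M * N)) ^ (k + 3)
          = 2 ^ (k + 4) * M ^ (k + 1) * N ^ (k + 3) := by
        rw [mul_pow, mul_pow]
        have : M ^ (k + 3) = M ^ (k + 1) * M ^ 2 := by ring
        rw [this]
        have hm2 : m ^ 2 * M ^ 2 = 1 := by
          rw [← mul_pow, hmM, one_pow]
        have : 2 * m ^ 2 * (2 ^ (k + 3) * (M ^ (k + 1) * M ^ 2 * N ^ (k + 3)))
            = (m ^ 2 * M ^ 2) * (2 ^ (k + 4) * M ^ (k + 1) * N ^ (k + 3)) := by ring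
        rw [this, hm2, one_mul]
      nlinarith [mul_le_mul_of_nonneg_left (h1.trans_eq h2) hck0.le]
    linarith [e1 ▸ add_le_add b1 b2]
  -- assemble
  have hA : ((r - c) ^ 2 + m ^ 2) = N ^ 2 := hN.symm
  rw [hA]
  have hNk5 : (0:ℝ) < N ^ (k + 5) := by positivity
  have lhs_le : |(N ^ 2 - ck * Q ^ 2) / N ^ (k + 5) * r ^ (k + 1)|
      ≤ (N ^ 2 + ck * (r * d) ^ 2) * r ^ (k + 1) / N ^ (k + 5) := by
    rw [abs_mul, abs_div, abs_of_nonneg hNk5.le, abs_of_nonneg (by positivity : (0:ℝ) ≤ r ^ (k+1))]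
    rw [div_mul_eq_mul_div]
    gcongr
  refine lhs_le.trans ?_
  have step : (N ^ 2 + ck * (r * d) ^ 2) * r ^ (k + 1) / N ^ (k + 5)
      ≤ (2 ^ (k + 1) + ck * 2 ^ (k + 4)) * M ^ (k + 1) * N ^ (k + 3) / N ^ (k + 5) := by
    gcongr
  refine step.trans_eq ?_
  have hN0 : N ≠ 0 := hNpos.ne'
  have hN2 : (N ^ 2)⁻¹ = N ^ (k + 3) / N ^ (k + 5) := by
    field_simp
    ring
  rw [hN2]
  ring

set_option maxHeartbeats 1000000 in
/-- near-diagonal estimate `|ω̂(x,ξ,z)| ≤ C |x-z|^{-n}`. -/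
theorem stmt_10 (n : ℕ) (hn : 2 ≤ n) :
    ∃ C : ℝ, 0 < C ∧ ∃ δ ∈ Set.Ioo (0 : ℝ) 1,
      ∀ x ∈ sphere (0 : EuclideanSpace ℝ (Fin (n + 1))) 1,
        ∀ ξ ∈ sphere (0 : EuclideanSpace ℝ (Fin (n + 1))) 1,
          ∀ z ∈ sphere (0 : EuclideanSpace ℝ (Fin (n + 1))) 1,
            ⟪ξ, x⟫ = 0 → 0 < ‖x - z‖ → ‖x - z‖ < δ →
              |omegaHat n x ξ z| ≤ C / ‖x - z‖ ^ n := by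
  obtain ⟨k, rfl⟩ := Nat.exists_eq_add_of_le hn
  set C0 : ℝ := 2 ^ (k + 1) + ((k : ℝ) + 3) * 2 ^ (k + 4) with hC0
  have hC0pos : 0 < C0 := by positivity
  have hω : 0 < omega_n (2 + k) := omega_n_pos _
  refine ⟨(1 / omega_n (2 + k)) * (C0 * Real.pi * 2 ^ (k + 2)), ?_, 1/2,
    ⟨by norm_num, by norm_num⟩, ?_⟩
  · have hπ := Real.pi_pos
    exact mul_pos (one_div_pos.2 hω) (by positivity)
  intro x hx ξ hξ z hz hperp hd0 hdδ
  have hx1 : ‖x‖ = 1 := mem_sphere_zero_iff_norm.1 hx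
  have hξ1 : ‖ξ‖ = 1 := mem_sphere_zero_iff_norm.1 hξ
  have hz1 : ‖z‖ = 1 := mem_sphere_zero_iff_norm.1 hz
  set d : ℝ := ‖x - z‖ with hdd
  set c : ℝ := ⟪x, z⟫ with hcc
  have hd2 : d ^ 2 = 2 - 2 * c := by
    rw [hdd, hcc, norm_sub_sq_real, hx1, hz1]; ring
  have hc1 : c < 1 := by nlinarith
  have hc0 : 0 ≤ c := by nlinarith
  have hcle : c ≤ 1 := hc1.le
  have h1c2 : 0 < 1 - c ^ 2 := by nlinarith
  set m : ℝ := Real.sqrt (1 - c ^ 2) with hmm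
  have hm2 : m ^ 2 = 1 - c ^ 2 := Real.sq_sqrt h1c2.le
  have hm0 : 0 < m := Real.sqrt_pos.2 h1c2
  have hm1 : m ≤ 1 := by nlinarith
  have hdm : d ^ 2 ≤ 2 * m ^ 2 := by nlinarith
  have hd2m : d ≤ 2 * m := by nlinarith
  -- rewrite the kernel
  have e1 : 2 + k + 3 = k + 5 := by omega
  have e2 : 2 + k - 1 = k + 1 := by omega
  have e3 : ((2 + k : ℕ) : ℝ) + 1 = (k : ℝ) + 3 := by push_cast; ring
  rw [omegaHat, e1, e2]
  rw [abs_mul, abs_of_nonneg (by positivity : (0:ℝ) ≤ 1 / omega_n (2 + k))]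
  -- bound the integral
  set g : ℝ → ℝ := fun r => (C0 * (m⁻¹) ^ (k + 1)) * (((r - c) ^ 2 + m ^ 2)⁻¹) with hgg
  have hg : IntegrableOn g (Ioi 0) := (aux_integrable c m hm0).const_mul _
  have hae : ∀ᵐ r ∂(volume.restrict (Ioi (0:ℝ))),
      ‖(‖x - r • z‖ ^ 2 - ((2 + k : ℕ) + 1) * ⟪ξ, r • z⟫ ^ 2) / ‖x - r • z‖ ^ (k + 5)
        * r ^ (k + 1)‖ ≤ g r := by
    rw [ae_restrict_iff' measurableSet_Ioi]
    refine Filter.Eventually.of_forall fun r hr => ?_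
    have hr0 : 0 < r := hr
    have hNsq : ‖x - r • z‖ ^ 2 = (r - c) ^ 2 + m ^ 2 := by
      rw [norm_sub_sq_real, hx1, norm_smul, Real.norm_eq_abs, hz1, real_inner_smul_right,
        hm2, ← hcc]
      rw [mul_pow, sq_abs]
      ring
    have hNpos : 0 < ‖x - r • z‖ := by
      have h2 : (0:ℝ) < ‖x - r • z‖ ^ 2 := by rw [hNsq]; positivity
      refine lt_of_le_of_ne (norm_nonneg _) fun h => ?_
      rw [← h] at h2
      simp at h2
    have hQ : |⟪ξ, r • z⟫| ≤ r * d := by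
      rw [real_inner_smul_right, abs_mul, abs_of_pos hr0]
      have h1 : ⟪ξ, z⟫ = ⟪ξ, z - x⟫ := by rw [inner_sub_right, hperp]; ring
      have h2 : |⟪ξ, z - x⟫| ≤ ‖ξ‖ * ‖z - x‖ := abs_real_inner_le_norm _ _
      rw [h1]
      have h3 : ‖z - x‖ = d := by rw [hdd, norm_sub_rev]
      rw [hξ1, one_mul, h3] at h2
      exact mul_le_mul_of_nonneg_left h2 hr0.le
    have key := ptwise k c m d r ‖x - r • z‖ ⟪ξ, r • z⟫ hm0 hm1 hdm hcle hr0
      hNsq hNpos hQ (norm_nonneg _)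
    rw [Real.norm_eq_abs, e3]
    exact key.trans_eq (by rw [hgg])
  have hint := norm_integral_le_of_norm_le hg hae
  have hgval : ∫ r in Ioi (0:ℝ), g r ≤ (C0 * (m⁻¹) ^ (k + 1)) * (Real.pi / m) := by
    rw [hgg]
    simp only []
    rw [integral_const_mul]
    exact mul_le_mul_of_nonneg_left (aux_integral_le c m hm0) (by positivity)
  have habs : |∫ r in Ioi (0:ℝ),
      (‖x - r • z‖ ^ 2 - ((2 + k : ℕ) + 1) * ⟪ξ, r • z⟫ ^ 2) / ‖x - r • z‖ ^ (k + 5)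
        * r ^ (k + 1)| ≤ (C0 * (m⁻¹) ^ (k + 1)) * (Real.pi / m) := by
    rw [← Real.norm_eq_abs]
    exact hint.trans hgval
  -- final arithmetic
  have hMd : m⁻¹ ≤ 2 / d := by
    rw [inv_eq_one_div, div_le_div_iff₀ hm0 hd0]
    linarith
  have hpow : (m⁻¹) ^ (k + 2) ≤ (2 / d) ^ (k + 2) :=
    pow_le_pow_left₀ (by positivity) hMd _
  calc 1 / omega_n (2 + k) * |∫ r in Ioi (0:ℝ),
        (‖x - r • z‖ ^ 2 - ((2 + k : ℕ) + 1) * ⟪ξ, r • z⟫ ^ 2) / ‖x - r • z‖ ^ (k + 5)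
          * r ^ (k + 1)|
      ≤ 1 / omega_n (2 + k) * ((C0 * (m⁻¹) ^ (k + 1)) * (Real.pi / m)) :=
        mul_le_mul_of_nonneg_left habs (by positivity)
    _ = 1 / omega_n (2 + k) * (C0 * Real.pi * (m⁻¹) ^ (k + 2)) := by
        rw [div_eq_mul_inv]; ring
    _ ≤ 1 / omega_n (2 + k) * (C0 * Real.pi * (2 / d) ^ (k + 2)) := by
        have hπ := Real.pi_pos
        apply mul_le_mul_of_nonneg_left _ (by positivity)
        exact mul_le_mul_of_nonneg_left hpow (by positivity)
    _ = 1 / omega_n (2 + k) * (C0 * Real.pi * 2 ^ (k + 2)) / d ^ (2 + k) := by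
        rw [div_pow]
        rw [show d ^ (k + 2) = d ^ (2 + k) from by rw [Nat.add_comm]]
        field_simp
end

section
/- Let n ≥ 2 and s ∈ (−1, 1). Then ∫_0^∞ r^{n−1} ( r² − 2 s r + 1 )^{−(n+1)/2} dr = (1 − s²)^{−n/2} ∫_{arccos s}^{π} (sin t)^{n−1} dt. Equivalently, for x, z ∈ S^n with z ≠ ±x, the kernel ω(x,z) = −∫_0^∞ r^{n−1} / |x − r z|^{n+1} dr equals (1 − ⟨x,z⟩²)^{−n/2} ∫_{π}^{arccos⟨x,z⟩} (sin t)^{n−1} dt. -/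
open MeasureTheory Metric Set
open scoped RealInnerProductSpace

open Real in
private lemma my_arccos_lt_pi {x : ℝ} (h1 : -1 < x) (h2 : x ≤ 1) : Real.arccos x < π :=
  lt_of_le_of_ne (Real.arccos_le_pi x) (fun h => by
    have := Real.cos_arccos h1.le h2
    rw [h, Real.cos_pi] at this; linarith)

open Real in
private lemma aux_img (s : ℝ) (hs1 : -1 < s) (hs2 : s < 1) :
    (fun t => Real.sin (t - Real.arccos s) / Real.sin t) '' Ioo (Real.arccos s) π = Ioi (0:ℝ) := by
  set θ := Real.arccos s with hθdef
  have hθ0 : 0 < θ := Real.arccos_pos.2 hs2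
  have hθπ : θ < π := my_arccos_lt_pi hs1 hs2.le
  have hcos : Real.cos θ = s := Real.cos_arccos hs1.le hs2.le
  have hsθ : 0 < Real.sin θ := Real.sin_pos_of_pos_of_lt_pi hθ0 hθπ
  have hP : (0:ℝ) < 1 - s^2 := by nlinarith
  have hsinsq : Real.sin θ ^ 2 = 1 - s ^ 2 := by
    rw [← hcos]; nlinarith [Real.sin_sq_add_cos_sq θ]
  apply Subset.antisymm
  · rintro _ ⟨t, ht, rfl⟩
    exact div_pos (Real.sin_pos_of_pos_of_lt_pi (by linarith [ht.1]) (by linarith [ht.2]))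
      (Real.sin_pos_of_pos_of_lt_pi (hθ0.trans ht.1) ht.2)
  · intro r hr
    simp only [mem_Ioi] at hr
    obtain ⟨D, hD0, hD2⟩ : ∃ D:ℝ, 0 < D ∧ D^2 = (s-r)^2+(1-s^2) :=
      ⟨Real.sqrt ((s - r)^2 + (1 - s^2)), Real.sqrt_pos.2 (by nlinarith),
        Real.sq_sqrt (by nlinarith)⟩
    set a := (s - r) / D with hadef
    clear_value a
    have ha1 : -1 < a := by
      rw [hadef, lt_div_iff₀ hD0, neg_one_mul, neg_lt]
      nlinarith [hD2, hD0]
    have ha2 : a < 1 := by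
      rw [hadef, div_lt_iff₀ hD0, one_mul]
      nlinarith [hD2, hD0]
    have hkey : a < s := by
      rw [hadef, div_lt_iff₀ hD0]
      rcases lt_trichotomy s 0 with h | h | h
      · have h1 : (s*D)^2 < (s - r)^2 := by
          nlinarith [hD2, mul_pos (mul_pos hP hr) (show (0:ℝ) < r - 2*s by linarith)]
        by_contra hc
        push_neg at hc
        have hc1 : (0:ℝ) ≤ (s - r) - s*D := by linarith
        have hc2 : (s - r) + s*D ≤ 0 := by nlinarith [mul_neg_of_neg_of_pos h hD0]
        nlinarith [mul_nonpos_of_nonneg_of_nonpos hc1 hc2]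
      · simp only [h, zero_mul]; linarith
      · rcases le_or_gt s r with h2 | h2
        · have hsD : 0 < s * D := mul_pos h hD0
          linarith
        · have h1 : (s - r)^2 < (s*D)^2 := by
            nlinarith [hD2, mul_pos (mul_pos hP hr) (show (0:ℝ) < 2*s - r by linarith)]
          by_contra hc
          push_neg at hc
          have hc1 : (0:ℝ) ≤ (s - r) - s*D := by linarith
          have hc2 : (0:ℝ) ≤ (s - r) + s*D := by nlinarith [mul_pos h hD0]
          nlinarith [mul_nonneg hc1 hc2]
    refine ⟨Real.arccos a, ⟨?_, my_arccos_lt_pi ha1 ha2.le⟩, ?_⟩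
    · exact Real.strictAntiOn_arccos ⟨ha1.le, ha2.le⟩ ⟨hs1.le, hs2.le⟩ hkey
    · have hcosa : Real.cos (Real.arccos a) = a := Real.cos_arccos ha1.le ha2.le
      have hDne : D ≠ 0 := hD0.ne'
      have h1 : 1 - a^2 = (Real.sin θ / D)^2 := by
        rw [hadef, div_pow, div_pow, hsinsq,
          eq_div_iff (pow_ne_zero 2 hDne), sub_mul,
          div_mul_cancel₀ _ (pow_ne_zero 2 hDne), one_mul]
        linarith
      have hsina : Real.sin (Real.arccos a) = Real.sin θ / D := by
        rw [Real.sin_arccos, h1, Real.sqrt_sq (by positivity)]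
      show Real.sin (Real.arccos a - θ) / Real.sin (Real.arccos a) = r
      rw [Real.sin_sub, hcosa, hsina, hcos, hadef]
      field_simp
      ring

open Real in
private lemma aux_part1 (n : ℕ) (hn : 2 ≤ n) (s : ℝ) (hs1 : -1 < s) (hs2 : s < 1) :
    ∫ r in Set.Ioi (0:ℝ), r ^ (n - 1) * (r ^ 2 - 2 * s * r + 1) ^ (-((n : ℝ) + 1) / 2) =
      (1 - s ^ 2) ^ (-(n : ℝ) / 2) * ∫ t in Real.arccos s..Real.pi, Real.sin t ^ (n - 1) := by
  obtain ⟨m, rfl⟩ : ∃ m, n = m + 1 := ⟨n - 1, by omega⟩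
  simp only [Nat.add_sub_cancel]
  set θ := Real.arccos s with hθdef
  have hθ0 : 0 < θ := Real.arccos_pos.2 hs2
  have hθπ : θ < π := my_arccos_lt_pi hs1 hs2.le
  have hcos : Real.cos θ = s := Real.cos_arccos hs1.le hs2.le
  have hsθ : 0 < Real.sin θ := Real.sin_pos_of_pos_of_lt_pi hθ0 hθπ
  have hP : (0:ℝ) < 1 - s ^ 2 := by nlinarith
  have hsinsq : Real.sin θ ^ 2 = 1 - s ^ 2 := by
    rw [← hcos]; nlinarith [Real.sin_sq_add_cos_sq θ]
  have hsin : Real.sin θ = Real.sqrt (1 - s ^ 2) := Real.sin_arccos s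
  set f : ℝ → ℝ := fun t => Real.sin (t - θ) / Real.sin t with hf
  have hsint : ∀ t ∈ Ioo θ π, 0 < Real.sin t := fun t ht =>
    Real.sin_pos_of_pos_of_lt_pi (hθ0.trans ht.1) ht.2
  have hsintθ : ∀ t ∈ Ioo θ π, 0 < Real.sin (t - θ) := fun t ht =>
    Real.sin_pos_of_pos_of_lt_pi (by linarith [ht.1]) (by linarith [ht.2])
  -- derivative
  have hderiv : ∀ t ∈ Ioo θ π, HasDerivAt f (Real.sin θ / Real.sin t ^ 2) t := by
    intro t ht
    have hst : Real.sin t ≠ 0 := (hsint t ht).ne'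
    have h1 : HasDerivAt (fun u => Real.sin (u - θ)) (Real.cos (t - θ)) t := by
      have h0 := (Real.hasDerivAt_sin (t - θ)).comp t ((hasDerivAt_id t).sub_const θ)
      rw [mul_one] at h0; exact h0
    have h2 := h1.div (Real.hasDerivAt_sin t) hst
    have hnum : Real.cos (t - θ) * Real.sin t - Real.sin (t - θ) * Real.cos t = Real.sin θ := by
      rw [Real.cos_sub, Real.sin_sub]
      linear_combination Real.sin θ * Real.sin_sq_add_cos_sq t
    rw [hnum] at h2; exact h2
  -- strict monotonicity
  have hmono : StrictMonoOn f (Ioo θ π) := by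
    apply strictMonoOn_of_deriv_pos (convex_Ioo θ π)
    · exact ContinuousOn.div
        ((Real.continuous_sin.comp (continuous_id.sub continuous_const)).continuousOn)
        Real.continuous_sin.continuousOn (fun t ht => (hsint t ht).ne')
    · intro t ht
      rw [interior_Ioo] at ht
      rw [(hderiv t ht).deriv]
      exact div_pos hsθ (pow_pos (hsint t ht) 2)
  -- image
  have himg : f '' Ioo θ π = Ioi (0:ℝ) := aux_img s hs1 hs2
  -- change of variables
  rw [← himg, integral_image_eq_integral_abs_deriv_smul measurableSet_Ioo
    (fun t ht => (hderiv t ht).hasDerivWithinAt) hmono.injOn]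
  -- pointwise simplification
  have hpt : EqOn
      (fun t => |Real.sin θ / Real.sin t ^ 2| •
        (f t ^ m * ((f t) ^ 2 - 2 * s * (f t) + 1) ^ (-((↑(m + 1) : ℝ) + 1) / 2)))
      (fun t => Real.sin (t - θ) ^ m / Real.sin θ ^ (m + 1)) (Ioo θ π) := by
    intro t ht
    have hst : 0 < Real.sin t := hsint t ht
    have hstθ : 0 < Real.sin (t - θ) := hsintθ t ht
    have habs : |Real.sin θ / Real.sin t ^ 2| = Real.sin θ / Real.sin t ^ 2 :=
      abs_of_pos (by positivity)
    have hQ : (f t) ^ 2 - 2 * s * (f t) + 1 = (Real.sin θ / Real.sin t) ^ 2 := by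
      have hkey : Real.sin (t - θ) ^ 2 - 2 * Real.cos θ * Real.sin (t - θ) * Real.sin t
          + Real.sin t ^ 2 = Real.sin θ ^ 2 := by
        rw [Real.sin_sub]
        linear_combination (Real.sin θ) ^ 2 * Real.sin_sq_add_cos_sq t
          - (Real.sin t) ^ 2 * Real.sin_sq_add_cos_sq θ
      have h2 : (f t) ^ 2 - 2 * s * (f t) + 1
          = (Real.sin (t - θ) ^ 2 - 2 * Real.cos θ * Real.sin (t - θ) * Real.sin t
              + Real.sin t ^ 2) / Real.sin t ^ 2 := by
        rw [hf, hcos]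
        simp only
        field_simp
      rw [h2, hkey, div_pow]
    have hQE : ((Real.sin θ / Real.sin t) ^ 2 : ℝ) ^ (-((↑(m + 1) : ℝ) + 1) / 2) =
        (Real.sin t / Real.sin θ) ^ (m + 2) := by
      have hq : (0:ℝ) < Real.sin θ / Real.sin t := div_pos hsθ hst
      rw [← Real.rpow_natCast (Real.sin θ / Real.sin t) 2, ← Real.rpow_mul hq.le]
      rw [show ((2:ℕ):ℝ) * (-((↑(m + 1) : ℝ) + 1) / 2) = -((m:ℝ) + 2) by push_cast; ring]
      rw [show -((m:ℝ) + 2) = -(((m + 2 : ℕ) : ℝ)) by push_cast; ring]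
      rw [Real.rpow_neg hq.le, Real.rpow_natCast, ← inv_pow, inv_div]
    simp only [smul_eq_mul]
    rw [habs, hQ, hQE, hf]
    simp only
    rw [div_pow]
    field_simp
    have hθ1 : Real.sin θ * (Real.sin θ)⁻¹ = 1 := mul_inv_cancel₀ hsθ.ne'
    calc _ = (Real.sin θ * (Real.sin θ)⁻¹) ^ 2 * (Real.sin θ * (Real.sin θ)⁻¹) ^ m
          * (Real.sin t ^ 2 * Real.sin t ^ m) := by ring
      _ = _ := by rw [hθ1]; ring
  rw [setIntegral_congr_fun measurableSet_Ioo hpt]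
  -- compute the t-integral
  have hIoo : ∫ t in Ioo θ π, Real.sin (t - θ) ^ m / Real.sin θ ^ (m + 1) =
      (∫ t in θ..π, Real.sin (t - θ) ^ m) / Real.sin θ ^ (m + 1) := by
    rw [intervalIntegral.integral_of_le hθπ.le, integral_Ioc_eq_integral_Ioo,
      integral_div]
  rw [hIoo]
  have hsub1 : ∫ t in θ..π, Real.sin (t - θ) ^ m = ∫ t in (0:ℝ)..(π - θ), Real.sin t ^ m := by
    have h := intervalIntegral.integral_comp_sub_right (a := θ) (b := π)
      (fun t => Real.sin t ^ m) θ
    rw [sub_self] at h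
    exact h
  have hsub2 : ∫ t in θ..π, Real.sin t ^ m = ∫ t in (0:ℝ)..(π - θ), Real.sin t ^ m := by
    have h := intervalIntegral.integral_comp_sub_left (a := (0:ℝ)) (b := π - θ)
      (fun t => Real.sin t ^ m) π
    simp only [Real.sin_pi_sub] at h
    rw [sub_sub_cancel, sub_zero] at h
    exact h.symm
  rw [hsub1, ← hsub2]
  have hconst : Real.sin θ ^ (m + 1) = (1 - s ^ 2) ^ (((m:ℝ) + 1) / 2) := by
    rw [hsin, Real.sqrt_eq_rpow, ← Real.rpow_natCast ((1 - s ^ 2) ^ (1/2 : ℝ)) (m + 1),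
      ← Real.rpow_mul hP.le]
    congr 1
    push_cast
    ring
  rw [show (-((↑(m + 1) : ℝ)) / 2) = -(((m:ℝ) + 1) / 2) by push_cast; ring,
    Real.rpow_neg hP.le, ← hconst, div_eq_mul_inv, mul_comm]

/-- explicit evaluation of the kernel `ω` (comparison with
Firey's condition). -/
theorem stmt_13 (n : ℕ) (hn : 2 ≤ n) :
    (∀ s : ℝ, -1 < s → s < 1 →
      ∫ r in Set.Ioi (0 : ℝ), r ^ (n - 1) * (r ^ 2 - 2 * s * r + 1) ^ (-((n : ℝ) + 1) / 2) =
        (1 - s ^ 2) ^ (-(n : ℝ) / 2) * ∫ t in Real.arccos s..Real.pi, Real.sin t ^ (n - 1))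
    ∧ (∀ x ∈ sphere (0 : EuclideanSpace ℝ (Fin (n + 1))) 1,
        ∀ z ∈ sphere (0 : EuclideanSpace ℝ (Fin (n + 1))) 1, z ≠ x → z ≠ -x →
          omegaKer n x z =
            (1 - ⟪x, z⟫ ^ 2) ^ (-(n : ℝ) / 2) *
              ∫ t in Real.pi..Real.arccos ⟪x, z⟫, Real.sin t ^ (n - 1)) := by
  refine ⟨fun s hs1 hs2 => aux_part1 n hn s hs1 hs2, ?_⟩
  intro x hx z hz hzx hznx
  have hx1 : ‖x‖ = 1 := by simpa using mem_sphere_zero_iff_norm.mp hx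
  have hz1 : ‖z‖ = 1 := by simpa using mem_sphere_zero_iff_norm.mp hz
  set s := ⟪x, z⟫ with hsdef
  have habs : |s| ≤ 1 := by
    have := abs_real_inner_le_norm x z
    rwa [hx1, hz1, mul_one] at this
  have hs2 : s < 1 := by
    rcases lt_or_eq_of_le (abs_le.1 habs).2 with h | h
    · exact h
    · exact absurd ((inner_eq_one_iff_of_norm_eq_one hx1 hz1).1 h).symm hzx
  have hs1 : -1 < s := by
    rcases lt_or_eq_of_le (abs_le.1 habs).1 with h | h
    · exact h
    · exfalso
      apply hznx
      have h1 : ⟪x, -z⟫ = 1 := by rw [inner_neg_right, ← hsdef, ← h]; ring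
      have := (inner_eq_one_iff_of_norm_eq_one hx1 (by rw [norm_neg, hz1])).1 h1
      rw [this]
      simp
  have hker : omegaKer n x z =
      -∫ r in Set.Ioi (0:ℝ), r ^ (n - 1) * (r ^ 2 - 2 * s * r + 1) ^ (-((n : ℝ) + 1) / 2) := by
    unfold omegaKer
    congr 1
    apply setIntegral_congr_fun measurableSet_Ioi
    intro r hr
    simp only [mem_Ioi] at hr
    show r ^ (n - 1) / ‖x - r • z‖ ^ (n + 1)
        = r ^ (n - 1) * (r ^ 2 - 2 * s * r + 1) ^ (-((n : ℝ) + 1) / 2)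
    have hQpos : (0:ℝ) < r ^ 2 - 2 * s * r + 1 := by
      nlinarith [abs_le.1 habs, sq_nonneg (r - s)]
    have hnorm : ‖x - r • z‖ ^ 2 = r ^ 2 - 2 * s * r + 1 := by
      rw [norm_sub_sq_real, hx1, real_inner_smul_right, norm_smul, hz1]
      simp only [Real.norm_eq_abs, abs_of_pos hr, mul_one]
      ring
    have hnn : ‖x - r • z‖ = Real.sqrt (r ^ 2 - 2 * s * r + 1) := by
      rw [← hnorm, Real.sqrt_sq (norm_nonneg _)]
    have hpow : ((r ^ 2 - 2 * s * r + 1) ^ (-((n:ℝ) + 1) / 2))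
        = (Real.sqrt (r ^ 2 - 2 * s * r + 1) ^ (n + 1))⁻¹ := by
      rw [Real.sqrt_eq_rpow, ← Real.rpow_natCast _ (n + 1), ← Real.rpow_mul hQpos.le,
        ← Real.rpow_neg hQpos.le]
      congr 1
      push_cast
      ring
    rw [hnn, hpow, div_eq_mul_inv]
  rw [hker, aux_part1 n hn s hs1 hs2, intervalIntegral.integral_symm (Real.arccos s) Real.pi,
    mul_neg]
end

section
/- Let n ≥ 2 and p > 2. Let f : ℝ^{n+1}\{0} → (0,∞) be a positive continuous function homogeneous of degree −p, and let u : ℝ^{n+1}\{0} → (0,∞) be a positive C² function homogeneous of degree 1 satisfying Δu = f u^{p−1} on ℝ^{n+1}\{0}. Then ( max_{S^n} u )^{p−2} ≤ n / ( min_{S^n} f ). -/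
open MeasureTheory Metric Set
open scoped RealInnerProductSpace

/-- The Euclidean Laplacian of `u : ℝ^m → ℝ`, as the sum of second partial
derivatives along the standard coordinate directions. -/
noncomputable def laplacian {m : ℕ} (u : EuclideanSpace ℝ (Fin m) → ℝ)
    (x : EuclideanSpace ℝ (Fin m)) : ℝ :=
  ∑ i, fderiv ℝ (fun y => fderiv ℝ u y (EuclideanSpace.single i 1)) x (EuclideanSpace.single i 1)


/-- Second-derivative test: at an interior local max, the second derivative is ≤ 0. -/
lemma secondDeriv_nonpos_of_isLocalMax {φ φ' : ℝ → ℝ} {c : ℝ}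
    (hmax : IsLocalMax φ 0)
    (hd : ∀ᶠ t in nhds (0:ℝ), HasDerivAt φ (φ' t) t)
    (hd2 : HasDerivAt φ' c 0) : c ≤ 0 := by
  by_contra hc
  push_neg at hc
  have h0 : φ' 0 = 0 := hmax.hasDerivAt_eq_zero hd.self_of_nhds
  have hslope : Filter.Tendsto (slope φ' 0) (nhdsWithin 0 {(0:ℝ)}ᶜ) (nhds c) :=
    hasDerivAt_iff_tendsto_slope.1 hd2
  have hev : ∀ᶠ t in nhdsWithin (0:ℝ) {(0:ℝ)}ᶜ, 0 < slope φ' 0 t :=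
    hslope.eventually (eventually_gt_nhds hc)
  rw [eventually_nhdsWithin_iff] at hev
  have hall : ∀ᶠ t in nhds (0:ℝ),
      (t ∈ ({(0:ℝ)}ᶜ : Set ℝ) → 0 < slope φ' 0 t) ∧ HasDerivAt φ (φ' t) t ∧ φ t ≤ φ 0 :=
    hev.and (hd.and hmax)
  rcases Metric.eventually_nhds_iff.1 hall with ⟨δ, hδ, hδall⟩
  set b := δ/2 with hb
  have hb0 : 0 < b := by positivity
  have hbδ : b < δ := by simp only [hb]; linarith
  have hmem : ∀ s : ℝ, 0 < s → s ≤ b → 0 < φ' s := by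
    intro s hs hsb
    have hdist : dist s 0 < δ := by
      rw [Real.dist_eq, sub_zero, abs_of_pos hs]; linarith
    have h1 := (hδall hdist).1 (by simpa using hs.ne')
    rw [slope_def_field, h0, sub_zero, sub_zero, div_pos_iff] at h1
    rcases h1 with ⟨h, _⟩ | ⟨_, h⟩
    · exact h
    · linarith
  have hdistb : ∀ s : ℝ, s ∈ Icc (0:ℝ) b → dist s 0 < δ := by
    intro s hs
    rw [Real.dist_eq, sub_zero, abs_of_nonneg hs.1]
    linarith [hs.2]
  have hcont : ContinuousOn φ (Icc 0 b) := fun s hs =>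
    ((hδall (hdistb s hs)).2.1.continuousAt).continuousWithinAt
  have hderiv : ∀ s ∈ Ioo (0:ℝ) b, HasDerivAt φ (φ' s) s := fun s hs =>
    (hδall (hdistb s ⟨hs.1.le, hs.2.le⟩)).2.1
  obtain ⟨ξ, hξ, hξeq⟩ := exists_hasDerivAt_eq_slope φ φ' hb0 hcont hderiv
  have h1 : 0 < φ' ξ := hmem ξ hξ.1 hξ.2.le
  have h2 : φ b ≤ φ 0 := (hδall (hdistb b ⟨hb0.le, le_rfl⟩)).2.2
  rw [hξeq] at h1
  have h3 : (φ b - φ 0) / (b - 0) ≤ 0 :=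
    div_nonpos_iff.2 (Or.inr ⟨by linarith, by linarith⟩)
  linarith

lemma hasDerivAt_poly4 (b0 b1 b2 b3 b4 t : ℝ) :
    HasDerivAt (fun s : ℝ => b0 + b1*s + b2*s^2 + b3*s^3 + b4*s^4)
      (b1 + 2*b2*t + 3*b3*t^2 + 4*b4*t^3) t := by
  have h : HasDerivAt (fun s : ℝ => b0 + b1*s + b2*s^2 + b3*s^3 + b4*s^4)
      (0 + b1*1 + b2*((2:ℕ)*t^(2-1)) + b3*((3:ℕ)*t^(3-1)) + b4*((4:ℕ)*t^(4-1))) t := by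
    exact ((((hasDerivAt_const t b0).add ((hasDerivAt_id t).const_mul b1)).add
      ((hasDerivAt_pow 2 t).const_mul b2)).add ((hasDerivAt_pow 3 t).const_mul b3)).add
      ((hasDerivAt_pow 4 t).const_mul b4)
  convert h using 1
  push_cast
  ring

lemma hasDerivAt_poly3 (b0 b1 b2 b3 t : ℝ) :
    HasDerivAt (fun s : ℝ => b0 + b1*s + b2*s^2 + b3*s^3)
      (b1 + 2*b2*t + 3*b3*t^2) t := by
  have h : HasDerivAt (fun s : ℝ => b0 + b1*s + b2*s^2 + b3*s^3)
      (0 + b1*1 + b2*((2:ℕ)*t^(2-1)) + b3*((3:ℕ)*t^(3-1))) t := by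
    exact (((hasDerivAt_const t b0).add ((hasDerivAt_id t).const_mul b1)).add
      ((hasDerivAt_pow 2 t).const_mul b2)).add ((hasDerivAt_pow 3 t).const_mul b3)
  convert h using 1
  push_cast
  ring

lemma le_of_sq_le_sq' {x y : ℝ} (h : x^2 ≤ y^2) (hx : 0 ≤ x) (hy : 0 < y) : x ≤ y := by
  nlinarith

lemma abs_le_one_of_sq_le_one' {a : ℝ} (h : a^2 ≤ 1) : |a| ≤ 1 :=
  le_of_sq_le_sq' (by rw [sq_abs, one_pow]; exact h) (abs_nonneg a) one_pos

lemma barrier_ineq {ε d : ℝ} (hε : 0 < ε) (hε1 : ε ≤ 1)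
    (hdb : |d| ≤ 3/4) (hdb2 : |d| ≤ 3*(ε/2)) :
    0 < 1 + d/2 + (ε - 1/8)*d^2 ∧ 1 + d ≤ (1 + d/2 + (ε - 1/8)*d^2)^2 := by
  have hdl := abs_le.1 hdb
  have hdl2 := abs_le.1 hdb2
  constructor
  · nlinarith [sq_nonneg d]
  · have hkey : 0 ≤ 2*ε + (ε - 1/8)*d + (ε - 1/8)^2*d^2 := by
      nlinarith [sq_nonneg ((ε - 1/8)*d)]
    nlinarith [sq_nonneg d, mul_nonneg (sq_nonneg d) hkey]

lemma final_alg {m M q nn : ℝ} (hm : 0 < m) (hM : 0 < M) (h : m * (q * M) ≤ M * nn) :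
    q * m ≤ nn := by
  have h2 : q * m * M ≤ nn * M := by nlinarith
  exact le_of_mul_le_mul_right h2 hM

/-- a priori bound `(max_{Sⁿ} u)^{p-2} ≤ n / min_{Sⁿ} f` for the
`L_p` Christoffel equation, `p > 2`. -/
theorem stmt_15 (n : ℕ) (hn : 2 ≤ n) (p : ℝ) (hp : 2 < p)
    (f u : EuclideanSpace ℝ (Fin (n + 1)) → ℝ)
    (hf_pos : ∀ y : EuclideanSpace ℝ (Fin (n + 1)), y ≠ 0 → 0 < f y)
    (hf_cont : ContinuousOn f {(0 : EuclideanSpace ℝ (Fin (n + 1)))}ᶜ)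
    (hf_hom : ∀ t : ℝ, 0 < t → ∀ y : EuclideanSpace ℝ (Fin (n + 1)), y ≠ 0 →
      f (t • y) = t ^ (-p) * f y)
    (hu_pos : ∀ y : EuclideanSpace ℝ (Fin (n + 1)), y ≠ 0 → 0 < u y)
    (hu_C2 : ContDiffOn ℝ 2 u {(0 : EuclideanSpace ℝ (Fin (n + 1)))}ᶜ)
    (hu_hom : ∀ t : ℝ, 0 < t → ∀ y : EuclideanSpace ℝ (Fin (n + 1)), y ≠ 0 →
      u (t • y) = t * u y)
    (hu_lap : ∀ y : EuclideanSpace ℝ (Fin (n + 1)), y ≠ 0 →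
      laplacian u y = f y * u y ^ (p - 1)) :
    sSup (u '' sphere (0 : EuclideanSpace ℝ (Fin (n + 1))) 1) ^ (p - 2) ≤
      n / sInf (f '' sphere (0 : EuclideanSpace ℝ (Fin (n + 1))) 1) := by
  have hopen : IsOpen ({(0 : EuclideanSpace ℝ (Fin (n+1)))}ᶜ) := isOpen_compl_singleton
  have hsc : sphere (0 : EuclideanSpace ℝ (Fin (n+1))) 1 ⊆ {(0 : EuclideanSpace ℝ (Fin (n+1)))}ᶜ := by
    intro y hy
    rw [mem_sphere_zero_iff_norm] at hy
    simp only [mem_compl_iff, mem_singleton_iff]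
    intro h
    rw [h] at hy; simp at hy
  have hne : (sphere (0 : EuclideanSpace ℝ (Fin (n+1))) 1).Nonempty :=
    ⟨EuclideanSpace.single 0 1, by
      rw [mem_sphere_zero_iff_norm, EuclideanSpace.norm_single]; norm_num⟩
  obtain ⟨x₀, hx₀, hmax⟩ := (isCompact_sphere _ _).exists_isMaxOn hne
    ((hu_C2.continuousOn).mono hsc)
  obtain ⟨x₁, hx₁, hmin⟩ := (isCompact_sphere _ _).exists_isMinOn hne (hf_cont.mono hsc)
  have hx₀ne : x₀ ∈ ({(0 : EuclideanSpace ℝ (Fin (n+1)))}ᶜ : Set _) := hsc hx₀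
  set M := u x₀ with hMdef
  set m := f x₁ with hmdef
  have hM : 0 < M := hu_pos x₀ hx₀ne
  have hm : 0 < m := hf_pos x₁ (hsc hx₁)
  have hSup : sSup (u '' sphere (0 : EuclideanSpace ℝ (Fin (n+1))) 1) = M :=
    IsGreatest.csSup_eq ⟨mem_image_of_mem _ hx₀, by
      rintro _ ⟨y, hy, rfl⟩; exact hmax hy⟩
  have hInf : sInf (f '' sphere (0 : EuclideanSpace ℝ (Fin (n+1))) 1) = m :=
    IsLeast.csInf_eq ⟨mem_image_of_mem _ hx₁, by
      rintro _ ⟨y, hy, rfl⟩; exact hmin hy⟩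
  have hmlef : m ≤ f x₀ := hmin hx₀
  have hnx₀ : ‖x₀‖ = 1 := mem_sphere_zero_iff_norm.1 hx₀
  -- u y ≤ M * ‖y‖ for y ≠ 0
  have hub : ∀ y : EuclideanSpace ℝ (Fin (n+1)), y ≠ 0 → u y ≤ M * ‖y‖ := by
    intro y hy
    have hny : 0 < ‖y‖ := norm_pos_iff.2 hy
    have hys : ‖y‖⁻¹ • y ∈ sphere (0 : EuclideanSpace ℝ (Fin (n+1))) 1 := by
      rw [mem_sphere_zero_iff_norm, norm_smul, norm_inv, norm_norm]
      field_simp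
    have h1 : u y = ‖y‖ * u (‖y‖⁻¹ • y) := by
      have := hu_hom ‖y‖ hny (‖y‖⁻¹ • y) (by
        intro h
        apply hy
        have : ‖y‖ • (‖y‖⁻¹ • y) = y := by
          rw [smul_smul, mul_inv_cancel₀ hny.ne', one_smul]
        rw [← this, h, smul_zero])
      rwa [smul_smul, mul_inv_cancel₀ hny.ne', one_smul] at this
    rw [h1, mul_comm]
    exact mul_le_mul_of_nonneg_right (hmax hys) hny.le
  -- sum of squares of coordinates of x₀
  have hsum : ∑ i, (x₀ i)^2 = 1 := by
    have h1 := EuclideanSpace.norm_eq x₀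
    rw [hnx₀] at h1
    have h2 : ∑ i, ‖x₀ i‖^2 = 1 := Real.sqrt_eq_one.1 h1.symm
    simpa [Real.norm_eq_abs, sq_abs] using h2
  have haibd : ∀ i, (x₀ i)^2 ≤ 1 := by
    intro i
    rw [← hsum]
    exact Finset.single_le_sum (fun j _ => sq_nonneg (x₀ j)) (Finset.mem_univ i)
  -- differentiability of u
  have hudiff : DifferentiableOn ℝ u ({(0 : EuclideanSpace ℝ (Fin (n+1)))}ᶜ) :=
    hu_C2.differentiableOn (by norm_num)
  -- key estimate for every small ε
  have key : ∀ ε : ℝ, 0 < ε → ε ≤ 1 → f x₀ * M ^ (p-1) ≤ M * (n + 8*ε) := by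
    intro ε hε hε1
    set cc : ℝ := ε - 1/8 with hccdef
    have hterm : ∀ i : Fin (n+1),
        fderiv ℝ (fun y => fderiv ℝ u y (EuclideanSpace.single i 1)) x₀
          (EuclideanSpace.single i 1) ≤ M * (1 + 8*cc*(x₀ i)^2) := by
      intro i
      set e : EuclideanSpace ℝ (Fin (n+1)) := EuclideanSpace.single i 1 with hedef
      set a : ℝ := x₀ i with hadef
      set L : ℝ → EuclideanSpace ℝ (Fin (n+1)) := fun t => x₀ + t • e with hLdef
      have hL0 : L 0 = x₀ := by simp [hLdef]
      have hLd : ∀ t, HasDerivAt L e t := by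
        intro t
        have := ((hasDerivAt_id t).smul_const e).const_add x₀
        simpa [hLdef] using this
      have hLnorm : ∀ t : ℝ, ‖L t‖^2 = 1 + (2*a*t + t^2) := by
        intro t
        have h1 : ‖x₀ + t • e‖^2 = ‖x₀‖^2 + 2*⟪x₀, t • e⟫ + ‖t • e‖^2 :=
          norm_add_sq_real x₀ (t • e)
        have h2 : ⟪x₀, t • e⟫ = t * a := by
          rw [real_inner_smul_right, hedef]
          simp [EuclideanSpace.inner_single_right]
          exact Or.inl rfl
        have h3 : ‖t • e‖^2 = t^2 := by
          rw [norm_smul, hedef, EuclideanSpace.norm_single]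
          simp [Real.norm_eq_abs, mul_pow, sq_abs]
        rw [hLdef]
        simp only
        rw [h1, h2, h3, hnx₀]
        ring
      set B2 : ℝ := M*(1/2 + 4*cc*a^2) with hB2def
      set χ : ℝ → ℝ := fun t => M + (M*a)*t + B2*t^2 + (4*M*cc*a)*t^3 + (M*cc)*t^4 with hχdef
      have hχ0 : χ 0 = M := by simp [hχdef]
      -- local max of u∘L - χ at 0
      have hlocmax : IsLocalMax (fun t => u (L t) - χ t) 0 := by
        have hδpos : 0 < min (1/4 : ℝ) (ε/2) := by positivity
        rw [IsLocalMax, IsMaxFilter]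
        filter_upwards [Metric.ball_mem_nhds (0:ℝ) hδpos] with t ht
        rw [Metric.mem_ball, Real.dist_eq, sub_zero] at ht
        have ht1 : |t| < 1/4 := lt_of_lt_of_le ht (min_le_left _ _)
        have ht2 : |t| < ε/2 := lt_of_lt_of_le ht (min_le_right _ _)
        have habs := abs_le.1 (le_of_lt ht1)
        have habs2 := abs_le.1 (le_of_lt ht2)
        have haa := haibd i
        have haa' := abs_le.1 (abs_le_one_of_sq_le_one' haa)
        set d : ℝ := 2*a*t + t^2 with hddef
        have hd1 : |d| ≤ 3 * |t| := by
          have h1 : |a| ≤ 1 := abs_le.2 haa'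
          have e0 : |d| ≤ |2*a*t| + |t^2| := abs_add_le _ _
          have e1 : |2*a*t| = 2 * (|a| * |t|) := by
            rw [abs_mul, abs_mul, abs_two]; ring
          have e2 : |t^2| = |t| * |t| := by
            rw [abs_pow]; ring
          have f1 : |a| * |t| ≤ |t| := mul_le_of_le_one_left (abs_nonneg t) h1
          have f2 : |t| * |t| ≤ (1/4) * |t| :=
            mul_le_mul_of_nonneg_right ht1.le (abs_nonneg t)
          have f3 : (0:ℝ) ≤ |t| := abs_nonneg t
          rw [e1, e2] at e0
          linarith
        have hdb : |d| ≤ 3/4 := by linarith [hd1, abs_nonneg t]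
        have hdb2 : |d| ≤ 3*(ε/2) := by linarith [hd1, abs_nonneg t]
        have hdl := abs_le.1 hdb
        have hdl2 := abs_le.1 hdb2
        set P : ℝ := 1 + d/2 + cc*d^2 with hPdef
        obtain ⟨hPpos', hPsq'⟩ := barrier_ineq hε hε1 hdb hdb2
        have hPpos : 0 < P := by rw [hPdef, hccdef]; exact hPpos'
        have hPsq : 1 + d ≤ P^2 := by rw [hPdef, hccdef]; exact hPsq'
        have hσpos : (0:ℝ) < 1 + d := by linarith [hdl.1]
        have hLne : L t ≠ 0 := by
          intro h
          have := hLnorm t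
          rw [h] at this
          simp at this
          rw [← hddef] at this
          linarith
        have hn1 : ‖L t‖ ≤ P := by
          have h1 : ‖L t‖^2 ≤ P^2 := by
            rw [hLnorm t, ← hddef]; exact hPsq
          exact le_of_sq_le_sq' h1 (norm_nonneg (L t)) hPpos
        have hult : u (L t) ≤ M * P := by
          calc u (L t) ≤ M * ‖L t‖ := hub _ hLne
            _ ≤ M * P := mul_le_mul_of_nonneg_left hn1 hM.le
        have hχt : χ t = M * P := by
          rw [hχdef, hPdef, hddef, hB2def]; ring
        rw [hL0, hχ0, hχt]
        linarith
      -- derivative machinery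
      set F : EuclideanSpace ℝ (Fin (n+1)) → ℝ := fun y => fderiv ℝ u y e with hFdef
      have hF1 : ContDiffOn ℝ 1 (fderiv ℝ u) ({(0 : EuclideanSpace ℝ (Fin (n+1)))}ᶜ) :=
        hu_C2.fderiv_of_isOpen hopen (by norm_num)
      have hFc : ContDiffOn ℝ 1 F ({(0 : EuclideanSpace ℝ (Fin (n+1)))}ᶜ) :=
        hF1.clm_apply contDiffOn_const
      have hFd : DifferentiableAt ℝ F x₀ :=
        ((hFc.differentiableOn (by norm_num)).differentiableAt (hopen.mem_nhds hx₀ne))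
      set χ' : ℝ → ℝ := fun t =>
        (M*a) + 2*B2*t + 3*(4*M*cc*a)*t^2 + 4*(M*cc)*t^3 with hχ'def
      have hd : ∀ᶠ t in nhds (0:ℝ), HasDerivAt (fun t => u (L t) - χ t) (F (L t) - χ' t) t := by
        have hLcont : Continuous L :=
          continuous_iff_continuousAt.2 fun t => (hLd t).continuousAt
        have hev : ∀ᶠ t in nhds (0:ℝ), L t ∈ ({(0 : EuclideanSpace ℝ (Fin (n+1)))}ᶜ : Set _) := by
          have := hLcont.continuousAt (x := (0:ℝ))
          exact this.eventually_mem (by rw [hL0]; exact hopen.mem_nhds hx₀ne)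
        filter_upwards [hev] with t ht
        have hu' : HasDerivAt (fun t => u (L t)) (F (L t)) t := by
          have hud : DifferentiableAt ℝ u (L t) := hudiff.differentiableAt (hopen.mem_nhds ht)
          exact hud.hasFDerivAt.comp_hasDerivAt t (hLd t)
        exact hu'.sub (hasDerivAt_poly4 M (M*a) B2 (4*M*cc*a) (M*cc) t)
      have hd2 : HasDerivAt (fun t => F (L t) - χ' t)
          (fderiv ℝ F x₀ e - (2*B2 + 2*(3*(4*M*cc*a))*0 + 3*(4*(M*cc))*0^2)) 0 := by
        have h1 : HasDerivAt (fun t => F (L t)) (fderiv ℝ F x₀ e) 0 := by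
          have hF' : HasFDerivAt F (fderiv ℝ F x₀) (L 0) := by
            rw [hL0]; exact hFd.hasFDerivAt
          exact hF'.comp_hasDerivAt 0 (hLd 0)
        exact h1.sub (by simpa using hasDerivAt_poly3 (M*a) (2*B2) (3*(4*M*cc*a)) (4*(M*cc)) 0)
      have hle := secondDeriv_nonpos_of_isLocalMax hlocmax hd hd2
      have : fderiv ℝ F x₀ e ≤ 2*B2 := by
        simp only [mul_zero, zero_pow, add_zero] at hle
        linarith [hle]
      calc fderiv ℝ (fun y => fderiv ℝ u y (EuclideanSpace.single i 1)) x₀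
            (EuclideanSpace.single i 1) = fderiv ℝ F x₀ e := by rw [hFdef, hedef]
        _ ≤ 2*B2 := this
        _ = M * (1 + 8*cc*(x₀ i)^2) := by rw [hB2def, hadef]; ring
    -- sum up
    have hlaple : laplacian u x₀ ≤ M * (↑n + 8*ε) := by
      have h1 : laplacian u x₀ ≤ ∑ i, M * (1 + 8*cc*(x₀ i)^2) := by
        unfold laplacian
        exact Finset.sum_le_sum fun i _ => hterm i
      have h2 : ∑ i : Fin (n+1), M * (1 + 8*cc*(x₀ i)^2) = M * (↑n + 8*ε) := by
        have h2' : ∀ i ∈ Finset.univ, M * (1 + 8*cc*(x₀ i)^2)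
            = M + (M*(8*cc))*(x₀ i)^2 := fun i _ => by ring
        rw [Finset.sum_congr rfl h2', Finset.sum_add_distrib, Finset.sum_const,
          ← Finset.mul_sum, Finset.card_univ, Fintype.card_fin, hsum, hccdef]
        push_cast
        ring
      rw [h2] at h1
      exact h1
    rw [hu_lap x₀ hx₀ne] at hlaple
    exact hlaple
  -- pass to the limit ε → 0
  have hmain : m * M ^ (p-1) ≤ M * n := by
    apply le_of_forall_pos_le_add
    intro η hη
    set ε : ℝ := min 1 (η/(8*M)) with hεdef
    have hε : 0 < ε := lt_min one_pos (by positivity)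
    have hε1 : ε ≤ 1 := min_le_left _ _
    have h1 := key ε hε hε1
    have h2 : m * M ^ (p-1) ≤ f x₀ * M ^ (p-1) :=
      mul_le_mul_of_nonneg_right hmlef (Real.rpow_nonneg hM.le _)
    have h3 : 8*M*ε ≤ η := by
      have : ε ≤ η/(8*M) := min_le_right _ _
      calc 8*M*ε ≤ 8*M*(η/(8*M)) :=
            mul_le_mul_of_nonneg_left this (by positivity)
        _ = η := by field_simp
    calc m * M ^ (p-1) ≤ M * (↑n + 8*ε) := le_trans h2 h1
      _ = M * ↑n + 8*M*ε := by ring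
      _ ≤ M * ↑n + η := by linarith
  rw [hSup, hInf]
  have hpow : M ^ (p-1) = M ^ (p-2) * M := by
    rw [show p - 1 = (p-2) + 1 by ring, Real.rpow_add hM, Real.rpow_one]
  rw [hpow] at hmain
  rw [le_div_iff₀ hm]
  exact final_alg hm hM hmain
end
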